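/- (Splitting into l families.) Let P_n = Σ_{j=0}^n (G^l)^j(x^n)/j! and write n = ml + i with 0 ≤ i ≤ l−1. Assume no element of Ŝ(i) is a nonpositive integer. On the polynomial ring ℂ[y], let G_i = [∏_{β∈I} (H_y + S_β(i))]∘∂_y, where H_y = y·d/dy, and let P_m^{(i)} = Σ_{j=0}^m G_i^j(y^m)/j!. Then P_{ml+i}(x) = η^{ml} · x^i · P_m^{(i)}((x/η)^l); i.e., the system {P_n} splits into l families, the i-th family being the d′-orthogonal system with Bochner property corresponding to G_i (with d′ = (d+1)l − 1). -/
import Mathlib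


open Polynomial

/-- Pochhammer symbol `(a)_j = a(a+1)⋯(a+j−1)`. -/
noncomputable def poch (a : ℂ) (j : ℕ) : ℂ := ∏ s ∈ Finset.range j, (a + s)

/-- The derivative operator `∂` on `ℂ[x]`. -/
noncomputable def Dop : Module.End ℂ (Polynomial ℂ) := Polynomial.derivative

/-- Multiplication by `x` on `ℂ[x]`. -/
noncomputable def Xop : Module.End ℂ (Polynomial ℂ) := LinearMap.mulLeft ℂ Polynomial.X

/-- `H = x∂`. -/
noncomputable def Hop : Module.End ℂ (Polynomial ℂ) := Xop * Dop

/-- `G = R(H)∘∂` with `R(H) = ρ·∏_{k=1}^d (H + α_k + 1)`. -/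
noncomputable def Gop (d : ℕ) (α : ℕ → ℂ) (ρ : ℂ) : Module.End ℂ (Polynomial ℂ) :=
  (Polynomial.aeval Hop
    (Polynomial.C ρ * ∏ k ∈ Finset.range d, (Polynomial.X + Polynomial.C (α k + 1)))) * Dop

lemma Hop_X_pow (k : ℕ) : Hop (X ^ k : Polynomial ℂ) = (k : ℂ) • X ^ k := by
  cases k with
  | zero => simp [Hop, Dop, Xop]
  | succ s =>
    simp [Hop, Dop, Xop, Module.End.mul_apply, Polynomial.derivative_X_pow,
      Polynomial.smul_eq_C_mul]
    ring

lemma Hop_pow_X_pow (s k : ℕ) : (Hop ^ s) (X ^ k : Polynomial ℂ) = ((k : ℂ) ^ s) • X ^ k := by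
  induction s with
  | zero => simp
  | succ n ih =>
    rw [pow_succ', Module.End.mul_apply, ih, map_smul, Hop_X_pow, smul_smul]
    ring_nf

lemma aeval_Hop_X_pow (p : Polynomial ℂ) (k : ℕ) :
    (Polynomial.aeval Hop p) (X ^ k) = p.eval (k : ℂ) • X ^ k := by
  induction p using Polynomial.induction_on' with
  | add p q hp hq => simp [hp, hq, add_smul]
  | monomial n a =>
    simp [Polynomial.aeval_monomial, Module.End.mul_apply, Hop_pow_X_pow,
      Polynomial.eval_monomial, Module.algebraMap_end_apply, smul_smul, mul_comm]

lemma Top_X_pow (p : Polynomial ℂ) (k : ℕ) :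
    ((Polynomial.aeval Hop p) * Dop) (X ^ k : Polynomial ℂ)
      = ((k : ℂ) * p.eval ((k : ℂ) - 1)) • X ^ (k - 1) := by
  cases k with
  | zero => simp [Dop, Module.End.mul_apply]
  | succ s =>
    rw [Module.End.mul_apply]
    have hD : Dop (X ^ (s + 1) : Polynomial ℂ) = ((s : ℂ) + 1) • X ^ s := by
      simp [Dop, Polynomial.derivative_X_pow, Polynomial.smul_eq_C_mul]
    rw [hD, map_smul, aeval_Hop_X_pow, smul_smul]
    push_cast
    ring_nf

lemma Top_pow_X_pow (p : Polynomial ℂ) (n j : ℕ) :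
    (((Polynomial.aeval Hop p) * Dop) ^ j) (X ^ n : Polynomial ℂ)
      = (∏ t ∈ Finset.range j,
          (((n - t : ℕ) : ℂ) * p.eval (((n - t : ℕ) : ℂ) - 1))) • X ^ (n - j) := by
  induction j with
  | zero => simp
  | succ s ih =>
    rw [pow_succ', Module.End.mul_apply, ih, map_smul, Top_X_pow, smul_smul,
      Finset.prod_range_succ, Nat.sub_sub]

lemma step_id (d : ℕ) (α : ℕ → ℂ) (ρ : ℂ) (l : ℕ) (hl : 1 ≤ l)
    (i : ℕ) (hi : i < l) (q : ℕ) (hq : 1 ≤ q) :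
    (∏ r ∈ Finset.range l,
        (((q * l + i - r : ℕ) : ℂ) *
          (ρ * ∏ k ∈ Finset.range d, (((q * l + i - r : ℕ) : ℂ) - 1 + (α k + 1)))))
      = ((l : ℂ) ^ (d + 1) * ρ) ^ l *
          ((q : ℂ) *
            ∏ kr ∈ (Finset.range (d + 1) ×ˢ Finset.range l).erase (d, i),
              ((q : ℂ) - 1 +
                (((if kr.1 < d then α kr.1 else 0) + i - kr.2) / (l : ℂ) + 1))) := by
  have hl0 : (l : ℂ) ≠ 0 := by
    exact_mod_cast Nat.cast_ne_zero.mpr (by omega)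
  have hmem : ((d, i) : ℕ × ℕ) ∈ Finset.range (d + 1) ×ˢ Finset.range l := by
    simp [hi]
  -- reinsert the erased factor
  have hfix : ((q : ℂ) - 1 +
      (((if d < d then α d else 0) + (i : ℂ) - i) / (l : ℂ) + 1)) = (q : ℂ) := by
    simp
  rw [show ((q : ℂ) * ∏ kr ∈ (Finset.range (d + 1) ×ˢ Finset.range l).erase (d, i),
        ((q : ℂ) - 1 +
          (((if kr.1 < d then α kr.1 else 0) + i - kr.2) / (l : ℂ) + 1)))
      = ∏ kr ∈ Finset.range (d + 1) ×ˢ Finset.range l,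
        ((q : ℂ) - 1 +
          (((if kr.1 < d then α kr.1 else 0) + i - kr.2) / (l : ℂ) + 1)) by
    rw [← Finset.mul_prod_erase _ _ hmem, hfix]]
  -- clear denominators
  have hcard : ((Finset.range (d + 1) ×ˢ Finset.range l).card) = (d + 1) * l := by
    simp [Finset.card_product]
  have hmul : ∏ kr ∈ Finset.range (d + 1) ×ˢ Finset.range l,
      ((l : ℂ) * ((q : ℂ) - 1 +
        (((if kr.1 < d then α kr.1 else 0) + i - kr.2) / (l : ℂ) + 1)))
      = (l : ℂ) ^ ((d + 1) * l) *
        ∏ kr ∈ Finset.range (d + 1) ×ˢ Finset.range l,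
          ((q : ℂ) - 1 +
            (((if kr.1 < d then α kr.1 else 0) + i - kr.2) / (l : ℂ) + 1)) := by
    rw [Finset.prod_mul_distrib, Finset.prod_const, hcard]
  have hpt : ∀ kr ∈ Finset.range (d + 1) ×ˢ Finset.range l,
      ((l : ℂ) * ((q : ℂ) - 1 +
        (((if kr.1 < d then α kr.1 else 0) + i - kr.2) / (l : ℂ) + 1)))
      = ((q : ℂ) * l + (if kr.1 < d then α kr.1 else 0) + i - kr.2) := by
    intro kr _
    field_simp
    ring
  rw [Finset.prod_congr rfl hpt] at hmul
  have hηl : ((l : ℂ) ^ (d + 1) * ρ) ^ l = (l : ℂ) ^ ((d + 1) * l) * ρ ^ l := by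
    rw [mul_pow, ← pow_mul]
  rw [hηl, mul_assoc, mul_left_comm, ← hmul]
  -- now RHS = ρ^l * ∏_{(k,r)} (q l + A k + i - r)
  rw [Finset.prod_product]
  rw [Finset.prod_range_succ]
  -- LHS: cast and split
  have hz : ∀ r ∈ Finset.range l, ((q * l + i - r : ℕ) : ℂ) = (q : ℂ) * l + i - r := by
    intro r hr
    have hr' : r ≤ q * l + i := by
      have : r < l := Finset.mem_range.mp hr
      have : l ≤ q * l := Nat.le_mul_of_pos_left l (by omega)
      omega
    push_cast [Nat.cast_sub hr']
    ring
  calc ∏ r ∈ Finset.range l,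
        (((q * l + i - r : ℕ) : ℂ) *
          (ρ * ∏ k ∈ Finset.range d, (((q * l + i - r : ℕ) : ℂ) - 1 + (α k + 1))))
      = ∏ r ∈ Finset.range l,
        (ρ * (((q : ℂ) * l + 0 + i - r) *
          ∏ k ∈ Finset.range d, ((q : ℂ) * l + α k + i - r))) := by
        refine Finset.prod_congr rfl fun r hr => ?_
        rw [hz r hr]
        rw [show ∀ P : ℂ, ((q:ℂ)*l + i - r) * (ρ * P) = ρ * (((q:ℂ)*l + 0 + i - r) * P)
          from fun P => by ring]
        congr 1
        refine congrArg _ (Finset.prod_congr rfl fun k _ => by ring)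
    _ = ρ ^ l * ((∏ r ∈ Finset.range l,
          ∏ k ∈ Finset.range d, ((q : ℂ) * l + α k + i - r)) *
          ∏ r ∈ Finset.range l, ((q : ℂ) * l + 0 + i - r)) := by
        rw [Finset.prod_mul_distrib, Finset.prod_mul_distrib, Finset.prod_const,
          Finset.card_range]
        ring
    _ = ρ ^ l * ((∏ k ∈ Finset.range d,
          ∏ r ∈ Finset.range l, ((q : ℂ) * l + (if k < d then α k else 0) + i - r)) *
          ∏ r ∈ Finset.range l, ((q : ℂ) * l + (if d < d then α d else 0) + i - r)) := by
        rw [Finset.prod_comm]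
        simp only [if_neg (lt_irrefl d)]
        congr 1
        congr 1
        exact Finset.prod_congr rfl fun k hk =>
          Finset.prod_congr rfl fun r _ => by
            rw [if_pos (Finset.mem_range.mp hk)]

lemma key_id (d : ℕ) (α : ℕ → ℂ) (ρ : ℂ) (l : ℕ) (hl : 1 ≤ l)
    (i : ℕ) (hi : i < l) (m : ℕ) :
    ∀ j, j ≤ m →
    (∏ t ∈ Finset.range (l * j),
        (((m * l + i - t : ℕ) : ℂ) *
          (ρ * ∏ k ∈ Finset.range d, (((m * l + i - t : ℕ) : ℂ) - 1 + (α k + 1)))))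
      = ((l : ℂ) ^ (d + 1) * ρ) ^ (l * j) *
        ∏ t ∈ Finset.range j,
          (((m - t : ℕ) : ℂ) *
            ∏ kr ∈ (Finset.range (d + 1) ×ˢ Finset.range l).erase (d, i),
              (((m - t : ℕ) : ℂ) - 1 +
                (((if kr.1 < d then α kr.1 else 0) + i - kr.2) / (l : ℂ) + 1))) := by
  intro j
  induction j with
  | zero => simp
  | succ j ih =>
    intro hj
    have hj' : j ≤ m := by omega
    set q := m - j with hqdef
    have hq : 1 ≤ q := by omega
    have hml : q * l + l * j = m * l := by
      rw [hqdef, mul_comm l j, ← Nat.add_mul, Nat.sub_add_cancel hj']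
    have hql : l ≤ q * l := Nat.le_mul_of_pos_left l (by omega)
    have harg : ∀ r, r < l → m * l + i - (l * j + r) = q * l + i - r := by
      intro r hr; omega
    rw [Nat.mul_succ, Finset.prod_range_add]
    have hstep : (∏ r ∈ Finset.range l,
        (((m * l + i - (l * j + r) : ℕ) : ℂ) *
          (ρ * ∏ k ∈ Finset.range d, (((m * l + i - (l * j + r) : ℕ) : ℂ) - 1 + (α k + 1)))))
        = ((l : ℂ) ^ (d + 1) * ρ) ^ l *
          ((q : ℂ) *
            ∏ kr ∈ (Finset.range (d + 1) ×ˢ Finset.range l).erase (d, i),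
              ((q : ℂ) - 1 +
                (((if kr.1 < d then α kr.1 else 0) + i - kr.2) / (l : ℂ) + 1))) := by
      rw [Finset.prod_congr rfl (fun r hr => by
        rw [harg r (Finset.mem_range.mp hr)])]
      exact step_id d α ρ l hl i hi q hq
    rw [ih hj', hstep, Finset.prod_range_succ, pow_add]
    ring

/-- Splitting into `l` families: `P_{ml+i}(x) = η^{ml} x^i P_m^{(i)}((x/η)^l)`, where
`P_m^{(i)}` is the Bochner system built from `G_i = (∏_{β∈I} (H + S_β(i)))∘∂`. -/
theorem stmt13 (d : ℕ) (α : ℕ → ℂ) (ρ : ℂ) (hρ : ρ ≠ 0) (l : ℕ) (hl : 1 ≤ l)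
    (m i : ℕ) (hi : i < l) :
    let G := Gop d α ρ
    let η : ℂ := (l : ℂ) ^ (d + 1) * ρ
    let A : ℕ → ℂ := fun k => if k < d then α k else 0
    let S : ℕ × ℕ → ℂ := fun kr => (A kr.1 + i - kr.2) / (l : ℂ) + 1
    let Ihat : Finset (ℕ × ℕ) := (Finset.range (d + 1) ×ˢ Finset.range l).erase (d, i)
    let Gi : Module.End ℂ (Polynomial ℂ) :=
      (Polynomial.aeval Hop (∏ kr ∈ Ihat, (Polynomial.X + Polynomial.C (S kr)))) * Dop
    let Pi : Polynomial ℂ := ∑ j ∈ Finset.range (m + 1),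
      ((j.factorial : ℂ))⁻¹ • (Gi ^ j) (Polynomial.X ^ m)
    (∀ kr ∈ Ihat, ∀ s : ℕ, S kr ≠ -(s : ℂ)) →
    (∑ j ∈ Finset.range (m * l + i + 1),
        ((j.factorial : ℂ))⁻¹ • ((G ^ l) ^ j) (Polynomial.X ^ (m * l + i)))
      = η ^ (m * l) •
          (Polynomial.X ^ i * Pi.comp ((Polynomial.C η⁻¹ * Polynomial.X) ^ l)) := by
  intro G η A S Ihat Gi Pi hS
  clear hS
  have hl0 : (l : ℂ) ≠ 0 := Nat.cast_ne_zero.mpr (by omega)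
  have hη : η ≠ 0 := mul_ne_zero (pow_ne_zero _ hl0) hρ
  have hSd : ∀ kr : ℕ × ℕ,
      S kr = ((if kr.1 < d then α kr.1 else 0) + (i : ℂ) - kr.2) / (l : ℂ) + 1 :=
    fun kr => rfl
  have hId : Ihat = (Finset.range (d + 1) ×ˢ Finset.range l).erase (d, i) := rfl
  have hG : G = (Polynomial.aeval Hop
      (Polynomial.C ρ * ∏ k ∈ Finset.range d,
        (Polynomial.X + Polynomial.C (α k + 1)))) * Dop := rfl
  -- LHS summands
  have hLt : ∀ j : ℕ, ((G ^ l) ^ j) ((X : Polynomial ℂ) ^ (m * l + i)) =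
      (∏ t ∈ Finset.range (l * j),
        (((m * l + i - t : ℕ) : ℂ) *
          (ρ * ∏ k ∈ Finset.range d, (((m * l + i - t : ℕ) : ℂ) - 1 + (α k + 1)))))
        • X ^ (m * l + i - l * j) := by
    intro j
    rw [← pow_mul, hG, Top_pow_X_pow]
    congr 1
    refine Finset.prod_congr rfl fun t _ => ?_
    simp only [Polynomial.eval_mul, Polynomial.eval_C, Polynomial.eval_prod,
      Polynomial.eval_add, Polynomial.eval_X]
  -- RHS summands
  have hGi : Gi = (Polynomial.aeval Hop
      (∏ kr ∈ Ihat, (Polynomial.X + Polynomial.C (S kr)))) * Dop := rfl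
  have hRt : ∀ j : ℕ, (Gi ^ j) ((X : Polynomial ℂ) ^ m) =
      (∏ t ∈ Finset.range j,
        (((m - t : ℕ) : ℂ) * ∏ kr ∈ Ihat, (((m - t : ℕ) : ℂ) - 1 + S kr)))
        • X ^ (m - j) := by
    intro j
    rw [hGi, Top_pow_X_pow]
    congr 1
    refine Finset.prod_congr rfl fun t _ => ?_
    simp only [Polynomial.eval_prod, Polynomial.eval_add, Polynomial.eval_X,
      Polynomial.eval_C]
  -- expand the RHS into a sum of monomials
  have hRHS : η ^ (m * l) • ((X : Polynomial ℂ) ^ i *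
      Pi.comp ((Polynomial.C η⁻¹ * Polynomial.X) ^ l)) =
      ∑ j ∈ Finset.range (m + 1),
        (η ^ (m * l) * ((j.factorial : ℂ))⁻¹ *
          ((∏ t ∈ Finset.range j,
            (((m - t : ℕ) : ℂ) * ∏ kr ∈ Ihat, (((m - t : ℕ) : ℂ) - 1 + S kr)))
            * (η⁻¹) ^ (l * (m - j)))) • X ^ (l * (m - j) + i) := by
    have hPi : Pi = ∑ j ∈ Finset.range (m + 1),
        ((j.factorial : ℂ))⁻¹ • (Gi ^ j) ((X : Polynomial ℂ) ^ m) := rfl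
    rw [hPi]
    rw [Polynomial.sum_comp]
    rw [Finset.mul_sum, Finset.smul_sum]
    refine Finset.sum_congr rfl fun j _ => ?_
    rw [hRt j, smul_smul, Polynomial.smul_comp, Polynomial.X_pow_comp, ← pow_mul]
    rw [show ((Polynomial.C η⁻¹ * Polynomial.X : Polynomial ℂ)) ^ (l * (m - j))
        = (η⁻¹ ^ (l * (m - j))) • (X : Polynomial ℂ) ^ (l * (m - j)) by
      rw [mul_pow, ← map_pow, ← Polynomial.smul_eq_C_mul]]
    rw [smul_smul, mul_smul_comm, smul_smul]
    rw [show (X : Polynomial ℂ) ^ i * X ^ (l * (m - j)) = X ^ (l * (m - j) + i) by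
      rw [← pow_add, add_comm]]
    congr 1
    ring
  rw [hRHS]
  -- truncate the LHS sum
  rw [Finset.sum_congr rfl fun j _ => by rw [hLt j]]
  rw [← Finset.sum_subset (Finset.range_subset_range.mpr (by nlinarith : m + 1 ≤ m * l + i + 1))
    (fun j hj hj' => ?_)]
  swap
  · -- vanishing of terms with j > m
    have hjm : m + 1 ≤ j := by
      simp only [Finset.mem_range] at hj hj'; omega
    have hlt : m * l + i < l * j := by
      have : l * (m + 1) ≤ l * j := Nat.mul_le_mul_left l hjm
      have : m * l + l ≤ l * j := by rw [Nat.mul_succ, mul_comm] at this; omega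
      omega
    rw [Finset.prod_eq_zero (Finset.mem_range.mpr hlt)
      (by rw [Nat.sub_self]; simp), zero_smul, smul_zero]
  -- termwise comparison
  refine Finset.sum_congr rfl fun j hj => ?_
  have hjm : j ≤ m := by simpa [Nat.lt_succ_iff] using Finset.mem_range.mp hj
  have hmlj : l * (m - j) + l * j = m * l := by
    rw [← Nat.mul_add, Nat.sub_add_cancel hjm, mul_comm]
  have hexp : m * l + i - l * j = l * (m - j) + i := by omega
  rw [hexp, smul_smul]
  congr 1
  -- the scalar identity
  rw [key_id d α ρ l hl i hi m j hjm]
  simp only [hSd, hId]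
  have hsplit : η ^ (m * l) = η ^ (l * j) * η ^ (l * (m - j)) := by
    rw [← pow_add]; congr 1; omega
  have hcanc : η ^ (l * (m - j)) * η⁻¹ ^ (l * (m - j)) = 1 := by
    rw [← mul_pow, mul_inv_cancel₀ hη, one_pow]
  calc ((j.factorial : ℂ))⁻¹ * (((l : ℂ) ^ (d + 1) * ρ) ^ (l * j) *
        ∏ t ∈ Finset.range j,
          (((m - t : ℕ) : ℂ) *
            ∏ kr ∈ (Finset.range (d + 1) ×ˢ Finset.range l).erase (d, i),
              (((m - t : ℕ) : ℂ) - 1 +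
                (((if kr.1 < d then α kr.1 else 0) + i - kr.2) / (l : ℂ) + 1))))
      = η ^ (m * l) * ((j.factorial : ℂ))⁻¹ *
          ((∏ t ∈ Finset.range j,
            (((m - t : ℕ) : ℂ) *
              ∏ kr ∈ (Finset.range (d + 1) ×ˢ Finset.range l).erase (d, i),
                (((m - t : ℕ) : ℂ) - 1 +
                  (((if kr.1 < d then α kr.1 else 0) + i - kr.2) / (l : ℂ) + 1))))
            * (η⁻¹) ^ (l * (m - j))) := by
        rw [hsplit]
        have : ((l : ℂ) ^ (d + 1) * ρ) ^ (l * j) = η ^ (l * j) := rfl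
        rw [this]
        calc _ = (η ^ (l * (m - j)) * η⁻¹ ^ (l * (m - j))) *
              (((j.factorial : ℂ))⁻¹ * (η ^ (l * j) * _)) := by rw [hcanc, one_mul]
          _ = _ := by ring
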